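/- arXiv:2304.14263 — 5 statements merged into one kernel-verified Lean document; each statement's English description precedes it below -/
import Mathlib

section
/- Fix an integer m ≥ 1. Let f : ℝ → ℂ be smooth, compactly supported, with supp f ⊆ (-∞, 0), and set f̂(ζ) := (2π)^{-1/2} ∫_ℝ f(x) e^{-iζx} dx for ζ ∈ ℂ. Let G : (0, ∞) → ℂ be measurable with ∫_0^{∞} |G(p)|² p^{m-1} dp < ∞. Then the function F(z) := ∫_0^{∞} conj(G(p)) · e^{-πmz} · f̂(e^{-2πz} p) · p^{m-1} dp is well defined for every z ∈ S̄ (the integrand is absolutely integrable on (0, ∞)), F is continuous on S̄, and F is holomorphic on S. -/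
/-!
Because `f` is supported in `(-∞, 0)`, its Fourier–Laplace transform is entire, and repeated
integration by parts bounds it by `C · min 1 (|ζ|⁻¹ ^ m)` on the closed upper half-plane.
For `z ∈ S̄` the point `e^{-2πz} p` lies in that half-plane and has modulus `e^{-2π Re z} p`, so,
locally in `z`, the integrand is dominated by `|G p| · min 1 ((r p)⁻¹ ^ m) · p ^ (m - 1)`, which is
integrable by AM–GM against `|G p|² p ^ (m - 1)`. Dominated convergence gives continuity, and the
Cauchy estimate turns the same domination into one for the `z`-derivative, giving holomorphy.
-/

open MeasureTheory Metric Filter Topology Set Complex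
open scoped Real

section ParametricIntegral

variable {α E : Type*} [MeasurableSpace α] {μ : Measure α} [NormedAddCommGroup E] [NormedSpace ℂ E]

lemma aestronglyMeasurable_deriv_parametric {F : ℂ → α → E}
    (hF_meas : ∀ w, AEStronglyMeasurable (F w) μ) {z : ℂ} (hF_diff : ∀ᵐ a ∂μ, DifferentiableAt ℂ (F · a) z) :
    AEStronglyMeasurable (fun a => deriv (F · a) z) μ := by
  refine aestronglyMeasurable_of_tendsto_ae (𝓝[≠] z) (f := fun w a => slope (F · a) z w)
    (fun w => ?_) ?_
  · simp only [slope_def_module]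
    exact ((hF_meas w).sub (hF_meas z)).const_smul _
  · filter_upwards [hF_diff] with a ha
    exact hasDerivAt_iff_tendsto_slope.1 ha.hasDerivAt

theorem differentiableOn_integral_of_locally_dominated [CompleteSpace E] {F : ℂ → α → E} {U : Set ℂ}
    (hU : IsOpen U) (hF_meas : ∀ w, AEStronglyMeasurable (F w) μ)
    (hF_diff : ∀ᵐ a ∂μ, DifferentiableOn ℂ (F · a) U)
    (h_bound : ∀ z ∈ U, ∃ V ∈ 𝓝 z, ∃ bound : α → ℝ, Integrable bound μ ∧
      ∀ᵐ a ∂μ, ∀ w ∈ V, ‖F w a‖ ≤ bound a) :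
    DifferentiableOn ℂ (fun z => ∫ a, F z a ∂μ) U := by
  intro z hz
  obtain ⟨V, hV, bound, hbound_int, hbound⟩ := h_bound z hz
  obtain ⟨ε, hε, hεUV⟩ := nhds_basis_closedBall.mem_iff.1 (inter_mem (hU.mem_nhds hz) hV)
  have hε2 : 0 < ε / 2 := half_pos hε
  have hball : ∀ w ∈ ball z (ε / 2), closedBall w (ε / 2) ⊆ U ∩ V := fun w hw =>
    (closedBall_subset_closedBall' (by linarith [mem_ball'.1 hw |>.le, dist_comm w z])).trans hεUV
  have hderiv : ∀ᵐ a ∂μ, ∀ w ∈ ball z (ε / 2), HasDerivAt (F · a) (deriv (F · a) w) w := by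
    filter_upwards [hF_diff] with a ha w hw
    exact (ha.differentiableAt (hU.mem_nhds (hball w hw (mem_closedBall_self hε2.le)).1)).hasDerivAt
  have hderiv_bound : ∀ᵐ a ∂μ, ∀ w ∈ ball z (ε / 2), ‖deriv (F · a) w‖ ≤ bound a / (ε / 2) := by
    filter_upwards [hF_diff, hbound] with a hdiff hb w hw
    exact Complex.norm_deriv_le_of_forall_mem_sphere_norm_le hε2
      (hdiff.diffContOnCl_ball fun x hx => (hball w hw hx).1)
      fun x hx => hb x (hball w hw (sphere_subset_closedBall hx)).2
  have hF_int : Integrable (F z) μ :=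
    hbound_int.mono' (hF_meas z) <| hbound.mono fun a ha => ha z (mem_of_mem_nhds hV)
  have hF'_meas : AEStronglyMeasurable (fun a => deriv (F · a) z) μ :=
    aestronglyMeasurable_deriv_parametric hF_meas
      (hderiv.mono fun a ha => (ha z (mem_ball_self hε2)).differentiableAt)
  exact (hasDerivAt_integral_of_dominated_loc_of_deriv_le (ball_mem_nhds z hε2)
    (.of_forall hF_meas) hF_int hF'_meas hderiv_bound (hbound_int.div_const _) hderiv).2.differentiableAt.differentiableWithinAt

end ParametricIntegral

noncomputable def fourierLaplace (g : ℝ → ℂ) (ζ : ℂ) : ℂ := ∫ x : ℝ, g x * cexp (-(I * ζ * x))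

lemma norm_cexp_neg_I_mul (ζ : ℂ) (x : ℝ) : ‖cexp (-(I * ζ * x))‖ = Real.exp (ζ.im * x) := by
  simp [Complex.norm_exp, Complex.mul_re]

lemma hasDerivAt_cexp_neg_I_mul (ζ : ℂ) (x : ℝ) :
    HasDerivAt (fun x : ℝ => cexp (-(I * ζ * x))) (cexp (-(I * ζ * x)) * -(I * ζ)) x := by
  simpa using ((hasDerivAt_id (x : ℂ)).comp_ofReal.const_mul (-(I * ζ))).cexp

lemma integrable_mul_cexp_neg_I_mul {g : ℝ → ℂ} (hg : Continuous g) (hgc : HasCompactSupport g)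
    (ζ : ℂ) : Integrable (fun x : ℝ => g x * cexp (-(I * ζ * x))) :=
  (hg.mul (by fun_prop)).integrable_of_hasCompactSupport hgc.mul_right

lemma fourierLaplace_deriv {g : ℝ → ℂ} (hg : ContDiff ℝ 1 g) (hgc : HasCompactSupport g) (ζ : ℂ) :
    fourierLaplace (deriv g) ζ = I * ζ * fourierLaplace g ζ := by
  have hg' : Continuous (deriv g) := hg.continuous_deriv le_rfl
  have hibp := integral_mul_deriv_eq_deriv_mul_of_integrable
    (fun x _ => (hg.differentiable one_ne_zero x).hasDerivAt)
    (fun x _ => hasDerivAt_cexp_neg_I_mul ζ x)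
    (((integrable_mul_cexp_neg_I_mul hg.continuous hgc ζ).mul_const (-(I * ζ))).congr
      (.of_forall fun x => by simp [mul_assoc]))
    (integrable_mul_cexp_neg_I_mul hg' hgc.deriv ζ)
    (integrable_mul_cexp_neg_I_mul hg.continuous hgc ζ)
  simp only [← mul_assoc, integral_mul_const] at hibp
  rw [fourierLaplace, fourierLaplace, ← neg_neg (∫ x, deriv g x * _), ← hibp]
  ring

lemma norm_fourierLaplace_le {g : ℝ → ℂ} (hg : Integrable g) (hsupp : g.support ⊆ Iic 0)
    {ζ : ℂ} (hζ : 0 ≤ ζ.im) : ‖fourierLaplace g ζ‖ ≤ ∫ x, ‖g x‖ := by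
  refine norm_integral_le_of_norm_le hg.norm (.of_forall fun x => ?_)
  by_cases hx : g x = 0
  · simp [hx]
  rw [norm_mul, norm_cexp_neg_I_mul]
  refine mul_le_of_le_one_right (norm_nonneg _) (Real.exp_le_one_iff.2 ?_)
  exact mul_nonpos_of_nonneg_of_nonpos hζ (hsupp hx)

lemma pow_mul_norm_fourierLaplace_le (k : ℕ) {g : ℝ → ℂ} (hg : ContDiff ℝ k g)
    (hgc : HasCompactSupport g) (hsupp : g.support ⊆ Iic 0) {ζ : ℂ} (hζ : 0 ≤ ζ.im) :
    ‖ζ‖ ^ k * ‖fourierLaplace g ζ‖ ≤ ∫ x, ‖iteratedDeriv k g x‖ := by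
  induction k generalizing g with
  | zero =>
    simpa using norm_fourierLaplace_le (hg.continuous.integrable_of_hasCompactSupport hgc)
      hsupp hζ
  | succ k ih =>
    obtain ⟨-, -, hg'⟩ := contDiff_succ_iff_deriv.1 (by exact_mod_cast hg : ContDiff ℝ (k + 1) g)
    have hsupp' : (deriv g).support ⊆ Iic 0 :=
      support_deriv_subset.trans (closure_minimal hsupp isClosed_Iic)
    calc ‖ζ‖ ^ (k + 1) * ‖fourierLaplace g ζ‖
        = ‖ζ‖ ^ k * ‖fourierLaplace (deriv g) ζ‖ := by
          rw [fourierLaplace_deriv (hg.of_le (by exact_mod_cast le_add_self)) hgc]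
          simp [pow_succ, mul_assoc]
      _ ≤ ∫ x, ‖iteratedDeriv (k + 1) g x‖ := by
          rw [iteratedDeriv_succ']
          exact ih hg' hgc.deriv hsupp'

lemma norm_fourierLaplace_le_min (k : ℕ) {g : ℝ → ℂ} (hg : ContDiff ℝ k g)
    (hgc : HasCompactSupport g) (hsupp : g.support ⊆ Iic 0) :
    ∃ C, ∀ ζ : ℂ, 0 ≤ ζ.im → ∀ t : ℝ, 0 < t → t ≤ ‖ζ‖ →
      ‖fourierLaplace g ζ‖ ≤ C * min 1 (t⁻¹ ^ k) := by
  set C₀ := ∫ x, ‖g x‖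
  set Cₖ := ∫ x, ‖iteratedDeriv k g x‖
  refine ⟨max C₀ Cₖ, fun ζ hζ t ht htζ => ?_⟩
  have h₀ := pow_mul_norm_fourierLaplace_le 0 (hg.of_le (by simp)) hgc hsupp hζ
  have hₖ := pow_mul_norm_fourierLaplace_le k hg hgc hsupp hζ
  simp only [pow_zero, one_mul, iteratedDeriv_zero] at h₀
  rw [mul_min_of_nonneg _ _ ((norm_nonneg _).trans (h₀.trans (le_max_left _ _))), mul_one]
  refine le_min (h₀.trans (le_max_left _ _)) ?_
  calc ‖fourierLaplace g ζ‖ ≤ ‖ζ‖ ^ k * ‖fourierLaplace g ζ‖ / t ^ k := by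
        rw [le_div_iff₀ (by positivity), mul_comm]
        exact mul_le_mul_of_nonneg_right (pow_le_pow_left₀ ht.le htζ k) (norm_nonneg _)
    _ ≤ max C₀ Cₖ * t⁻¹ ^ k := by
        rw [div_eq_mul_inv, inv_pow]
        gcongr
        exact hₖ.trans (le_max_right _ _)

lemma differentiable_fourierLaplace {g : ℝ → ℂ} (hg : Continuous g) (hgc : HasCompactSupport g) :
    Differentiable ℂ (fourierLaplace g) := by
  refine differentiableOn_univ.1 <| differentiableOn_integral_of_locally_dominated isOpen_univ
    (fun w => (hg.mul (by fun_prop)).aestronglyMeasurable) (.of_forall fun x => ?_)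
    fun ζ _ => ⟨ball ζ 1, ball_mem_nhds ζ one_pos,
      fun x => ‖g x‖ * Real.exp ((|ζ.im| + 1) * |x|), ?_, .of_forall fun x w hw => ?_⟩
  · exact (by fun_prop : Differentiable ℂ fun w : ℂ => g x * cexp (-(I * w * x))).differentiableOn
  · exact (by fun_prop : Continuous _).integrable_of_hasCompactSupport hgc.norm.mul_right
  · have hw_im : |w.im| ≤ |ζ.im| + 1 := by
      have := (abs_im_le_norm (w - ζ)).trans (mem_ball_iff_norm.1 hw).le
      rw [sub_im] at this
      linarith [abs_sub_abs_le_abs_sub w.im ζ.im]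
    rw [norm_mul, norm_cexp_neg_I_mul]
    refine mul_le_mul_of_nonneg_left (Real.exp_le_exp.2 ?_) (norm_nonneg _)
    calc w.im * x ≤ |w.im| * |x| := by rw [← abs_mul]; exact le_abs_self _
      _ ≤ (|ζ.im| + 1) * |x| := by gcongr

lemma integrableOn_min_one_inv_pow_sq_mul_pow {m : ℕ} (hm : 1 ≤ m) {r : ℝ} (hr : 0 < r) :
    IntegrableOn (fun p : ℝ => min 1 ((r * p)⁻¹ ^ m) ^ 2 * p ^ (m - 1)) (Ioi 0) := by
  have hmeas : AEStronglyMeasurable (fun p : ℝ => min 1 ((r * p)⁻¹ ^ m) ^ 2 * p ^ (m - 1)) :=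
    (by fun_prop : Measurable _).aestronglyMeasurable
  have hnonneg : ∀ p : ℝ, 0 < p → 0 ≤ min 1 ((r * p)⁻¹ ^ m) := fun p hp =>
    le_min zero_le_one (by positivity)
  rw [← Ioc_union_Ioi_eq_Ioi (inv_pos.2 hr).le]
  refine IntegrableOn.union ?_ ?_
  · refine ((continuous_pow (m - 1)).integrableOn_Ioc).mono' hmeas.restrict ?_
    refine (ae_restrict_iff' measurableSet_Ioc).2 (.of_forall fun p hp => ?_)
    rw [Real.norm_of_nonneg (mul_nonneg (pow_nonneg (hnonneg p hp.1) 2) (pow_nonneg hp.1.le _))]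
    exact mul_le_of_le_one_left (pow_nonneg hp.1.le _)
      (pow_le_one₀ (hnonneg p hp.1) (min_le_left _ _))
  · have hexp : -(m : ℝ) - 1 < -1 := by linarith [(Nat.one_le_cast.2 hm : (1 : ℝ) ≤ m)]
    refine ((integrableOn_Ioi_rpow_of_lt hexp (inv_pos.2 hr)).const_mul (r⁻¹ ^ (2 * m))).mono'
      hmeas.restrict ?_
    refine (ae_restrict_iff' measurableSet_Ioi).2 (.of_forall fun p hp => ?_)
    have hp0 : 0 < p := (inv_pos.2 hr).trans hp
    have hrpow : r⁻¹ ^ (2 * m) * p ^ (-(m : ℝ) - 1) = ((r * p)⁻¹ ^ m) ^ 2 * p ^ (m - 1) := by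
      rw [show -(m : ℝ) - 1 = ((m - 1 : ℕ) : ℝ) - (2 * m : ℕ) by push_cast [Nat.cast_sub hm]; ring,
        Real.rpow_sub hp0, Real.rpow_natCast, Real.rpow_natCast]
      rw [mul_inv]
      ring
    rw [Real.norm_of_nonneg (mul_nonneg (pow_nonneg (hnonneg p hp0) 2) (pow_nonneg hp0.le _)),
      hrpow]
    gcongr
    exact min_le_right _ _

lemma integrableOn_mul_mul_of_sq {α : Type*} [MeasurableSpace α] {μ : Measure α} {s : Set α}
    (hs : MeasurableSet s) {u v w : α → ℝ}
    (hu : Measurable u) (hv : Measurable v) (hw : Measurable w)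
    (hw0 : ∀ p ∈ s, 0 ≤ w p) (hu2 : IntegrableOn (fun p => u p ^ 2 * w p) s μ)
    (hv2 : IntegrableOn (fun p => v p ^ 2 * w p) s μ) :
    IntegrableOn (fun p => u p * v p * w p) s μ := by
  refine ((hu2.add hv2).div_const 2).mono'
    (by fun_prop : Measurable fun p => u p * v p * w p).aestronglyMeasurable ?_
  refine (ae_restrict_iff' hs).2 (.of_forall fun p hp => ?_)
  rw [Real.norm_eq_abs, abs_mul, abs_mul, abs_of_nonneg (hw0 p hp), Pi.add_apply]
  have := two_mul_le_add_sq |u p| |v p|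
  rw [sq_abs, sq_abs] at this
  nlinarith [hw0 p hp]

section StripIntegral

variable {m : ℕ} {G : ℝ → ℂ} {Φ : ℂ → ℂ}

noncomputable def stripIntegrand (m : ℕ) (G : ℝ → ℂ) (Φ : ℂ → ℂ) (z : ℂ) (p : ℝ) : ℂ :=
  (starRingEnd ℂ) (G p) * cexp (-((π : ℂ) * m * z)) *
    Φ (cexp (-(2 * (π : ℂ) * z)) * p) * (p : ℂ) ^ (m - 1)

lemma im_cexp_neg_two_pi_mul_ofReal_nonneg {z : ℂ} (h₁ : -(1 / 2) ≤ z.im) (h₂ : z.im ≤ 0) {p : ℝ}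
    (hp : 0 ≤ p) : 0 ≤ (cexp (-(2 * (π : ℂ) * z)) * p).im := by
  have hsin : 0 ≤ Real.sin (-(2 * π * z.im)) :=
    Real.sin_nonneg_of_nonneg_of_le_pi (by nlinarith [Real.pi_pos]) (by nlinarith [Real.pi_pos])
  have him : (cexp (-(2 * (π : ℂ) * z)) * p).im
      = Real.exp (-(2 * π * z.re)) * Real.sin (-(2 * π * z.im)) * p := by
    simp [Complex.exp_im, Complex.mul_re, Complex.mul_im]
  rw [him]
  positivity

lemma norm_cexp_neg_two_pi_mul_ofReal (z : ℂ) {p : ℝ} (hp : 0 ≤ p) :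
    ‖cexp (-(2 * (π : ℂ) * z)) * p‖ = Real.exp (-(2 * π * z.re)) * p := by
  simp [Complex.norm_exp, Complex.mul_re, abs_of_nonneg hp]

lemma integrableOn_norm_mul_min_one_inv_pow_mul_pow (hm : 1 ≤ m) (hGm : Measurable G)
    (hG2 : IntegrableOn (fun p : ℝ => ‖G p‖ ^ 2 * p ^ (m - 1)) (Ioi 0)) {r : ℝ} (hr : 0 < r) :
    IntegrableOn (fun p : ℝ => ‖G p‖ * min 1 ((r * p)⁻¹ ^ m) * p ^ (m - 1)) (Ioi 0) :=
  integrableOn_mul_mul_of_sq measurableSet_Ioi hGm.norm (by fun_prop) (by fun_prop)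
    (fun _ hp => pow_nonneg (le_of_lt hp) _) hG2 (integrableOn_min_one_inv_pow_sq_mul_pow hm hr)

lemma measurable_stripIntegrand (hGm : Measurable G) (hΦc : Continuous Φ) (z : ℂ) :
    Measurable (stripIntegrand m G Φ z) := by
  unfold stripIntegrand
  fun_prop

variable (hm : 1 ≤ m) (hGm : Measurable G)
  (hG2 : IntegrableOn (fun p : ℝ => ‖G p‖ ^ 2 * p ^ (m - 1)) (Ioi 0)) {C : ℝ}
  (hΦ : ∀ ζ : ℂ, 0 ≤ ζ.im → ∀ t : ℝ, 0 < t → t ≤ ‖ζ‖ → ‖Φ ζ‖ ≤ C * min 1 (t⁻¹ ^ m))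
include hΦ

lemma norm_stripIntegrand_le {R : ℝ} {z : ℂ} (h₁ : -(1 / 2) ≤ z.im) (h₂ : z.im ≤ 0)
    (hR : |z.re| ≤ R) {p : ℝ} (hp : 0 < p) :
    ‖stripIntegrand m G Φ z p‖ ≤
      C * Real.exp (π * m * R) *
        (‖G p‖ * min 1 ((Real.exp (-(2 * π * R)) * p)⁻¹ ^ m) * p ^ (m - 1)) := by
  have hre := abs_le.1 hR
  have hexp : Real.exp (-(π * m * z.re)) ≤ Real.exp (π * m * R) :=
    Real.exp_le_exp.2 <| by
      nlinarith [mul_nonneg (mul_nonneg Real.pi_pos.le (Nat.cast_nonneg m))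
        (by linarith : 0 ≤ R + z.re)]
  have ht : Real.exp (-(2 * π * R)) * p ≤ ‖cexp (-(2 * (π : ℂ) * z)) * p‖ := by
    rw [norm_cexp_neg_two_pi_mul_ofReal z hp.le]
    gcongr
    nlinarith [Real.pi_pos]
  have hΦζ := hΦ _ (im_cexp_neg_two_pi_mul_ofReal_nonneg h₁ h₂ hp.le) _ (by positivity) ht
  have hnorm : ‖stripIntegrand m G Φ z p‖ = Real.exp (-(π * m * z.re)) *
      (‖G p‖ * ‖Φ (cexp (-(2 * (π : ℂ) * z)) * p)‖ * p ^ (m - 1)) := by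
    simp only [stripIntegrand, Complex.norm_mul, RCLike.norm_conj, norm_exp, neg_re, mul_re,
      ofReal_re, natCast_re, ofReal_im, natCast_im, mul_zero, sub_zero, mul_im, zero_mul, add_zero,
      norm_pow, norm_real, Real.norm_eq_abs, abs_of_pos hp]
    ring
  calc ‖stripIntegrand m G Φ z p‖
      ≤ Real.exp (π * m * R) * (‖G p‖ * ‖Φ (cexp (-(2 * (π : ℂ) * z)) * p)‖ * p ^ (m - 1)) := by
        rw [hnorm]; gcongr
    _ ≤ Real.exp (π * m * R) *
        (‖G p‖ * (C * min 1 ((Real.exp (-(2 * π * R)) * p)⁻¹ ^ m)) * p ^ (m - 1)) := by gcongr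
    _ = _ := by ring

lemma ae_norm_stripIntegrand_le (R : ℝ) :
    ∀ᵐ p ∂volume.restrict (Ioi 0), ∀ z : ℂ, -(1 / 2) ≤ z.im → z.im ≤ 0 → |z.re| ≤ R →
      ‖stripIntegrand m G Φ z p‖ ≤
        C * Real.exp (π * m * R) *
          (‖G p‖ * min 1 ((Real.exp (-(2 * π * R)) * p)⁻¹ ^ m) * p ^ (m - 1)) :=
  (ae_restrict_iff' measurableSet_Ioi).2 <| .of_forall fun _ hp _ h₁ h₂ hR =>
    norm_stripIntegrand_le hΦ h₁ h₂ hR hp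

include hm hGm hG2

theorem integrableOn_stripIntegrand (hΦc : Continuous Φ) {z : ℂ} (h₁ : -(1 / 2) ≤ z.im)
    (h₂ : z.im ≤ 0) : IntegrableOn (stripIntegrand m G Φ z) (Ioi 0) :=
  ((integrableOn_norm_mul_min_one_inv_pow_mul_pow hm hGm hG2 (Real.exp_pos _)).const_mul _).mono'
    (measurable_stripIntegrand hGm hΦc z).aestronglyMeasurable
    ((ae_norm_stripIntegrand_le hΦ |z.re|).mono fun _ h => h z h₁ h₂ le_rfl)

theorem continuousOn_integral_stripIntegrand (hΦc : Continuous Φ) :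
    ContinuousOn (fun z => ∫ p in Ioi 0, stripIntegrand m G Φ z p)
      {z : ℂ | -(1 / 2) ≤ z.im ∧ z.im ≤ 0} := by
  intro z₀ _
  set R := |z₀.re| + 1
  have hnear : ∀ᶠ z in 𝓝 z₀, |z.re| ≤ R :=
    (continuous_re.abs.continuousAt.eventually (gt_mem_nhds (lt_add_one _))).mono fun _ => le_of_lt
  refine continuousWithinAt_of_dominated
    (.of_forall fun z => (measurable_stripIntegrand hGm hΦc z).aestronglyMeasurable) ?_
    ((integrableOn_norm_mul_min_one_inv_pow_mul_pow hm hGm hG2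
      (Real.exp_pos (-(2 * π * R)))).const_mul (C * Real.exp (π * m * R)))
    (.of_forall fun p => ?_)
  · filter_upwards [nhdsWithin_le_nhds hnear, self_mem_nhdsWithin] with z hzR hz
    exact (ae_norm_stripIntegrand_le hΦ R).mono fun _ h => h z hz.1 hz.2 hzR
  · have : Continuous (stripIntegrand m G Φ · p) := by unfold stripIntegrand; fun_prop
    exact this.continuousWithinAt

theorem differentiableOn_integral_stripIntegrand (hΦd : Differentiable ℂ Φ) :
    DifferentiableOn ℂ (fun z => ∫ p in Ioi 0, stripIntegrand m G Φ z p)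
      {z : ℂ | -(1 / 2) < z.im ∧ z.im < 0} := by
  have hopen : IsOpen {z : ℂ | -(1 / 2) < z.im ∧ z.im < 0} :=
    (isOpen_lt continuous_const continuous_im).inter (isOpen_lt continuous_im continuous_const)
  refine differentiableOn_integral_of_locally_dominated hopen
    (fun z => (measurable_stripIntegrand hGm hΦd.continuous z).aestronglyMeasurable)
    (.of_forall fun p => ?_) fun z₀ hz₀ => ?_
  · have : Differentiable ℂ (stripIntegrand m G Φ · p) := by unfold stripIntegrand; fun_prop
    exact this.differentiableOn
  set R := |z₀.re| + 1
  have hV : {z : ℂ | |z.re| < R} ∩ {z : ℂ | -(1 / 2) < z.im ∧ z.im < 0} ∈ 𝓝 z₀ :=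
    inter_mem ((isOpen_lt continuous_re.abs continuous_const).mem_nhds (lt_add_one |z₀.re|))
      (hopen.mem_nhds hz₀)
  exact ⟨_, hV, _, (integrableOn_norm_mul_min_one_inv_pow_mul_pow hm hGm hG2
      (Real.exp_pos (-(2 * π * R)))).const_mul (C * Real.exp (π * m * R)),
    (ae_norm_stripIntegrand_le hΦ R).mono fun _ h z hz => h z hz.2.1.le hz.2.2.le hz.1.le⟩

end StripIntegral

theorem stmt2 (m : ℕ) (hm : 1 ≤ m) (f : ℝ → ℂ)
    (hf : ContDiff ℝ (⊤ : ℕ∞) f) (hfc : HasCompactSupport f)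
    (hsupp : tsupport f ⊆ Set.Iio 0)
    (G : ℝ → ℂ) (hGm : Measurable G)
    (hG2 : IntegrableOn (fun p : ℝ => ‖G p‖ ^ 2 * p ^ (m - 1)) (Set.Ioi 0)) :
    let fhat : ℂ → ℂ := fun ζ =>
      ((Real.sqrt (2 * π) : ℝ) : ℂ)⁻¹ * ∫ x : ℝ, f x * Complex.exp (-(Complex.I * ζ * x))
    let F : ℂ → ℂ := fun z => ∫ p in Set.Ioi (0 : ℝ),
      (starRingEnd ℂ) (G p) * Complex.exp (-((π : ℂ) * m * z)) *
        fhat (Complex.exp (-(2 * (π : ℂ) * z)) * p) * (p : ℂ) ^ (m - 1)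
    (∀ z ∈ {z : ℂ | -(1 / 2) ≤ z.im ∧ z.im ≤ 0}, IntegrableOn (fun p : ℝ =>
        (starRingEnd ℂ) (G p) * Complex.exp (-((π : ℂ) * m * z)) *
          fhat (Complex.exp (-(2 * (π : ℂ) * z)) * p) * (p : ℂ) ^ (m - 1)) (Set.Ioi 0)) ∧
    ContinuousOn F {z : ℂ | -(1 / 2) ≤ z.im ∧ z.im ≤ 0} ∧
    DifferentiableOn ℂ F {z : ℂ | -(1 / 2) < z.im ∧ z.im < 0} := by
  intro fhat F
  set c : ℂ := ((Real.sqrt (2 * π) : ℝ) : ℂ)⁻¹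
  have hfhat_diff : Differentiable ℂ fhat :=
    (differentiable_fourierLaplace hf.continuous hfc).const_mul c
  obtain ⟨C, hC⟩ := norm_fourierLaplace_le_min m (hf.of_le (by exact_mod_cast le_top)) hfc
    (subset_tsupport f |>.trans <| hsupp.trans Iio_subset_Iic_self)
  have hfhat_decay : ∀ ζ : ℂ, 0 ≤ ζ.im → ∀ t : ℝ, 0 < t → t ≤ ‖ζ‖ →
      ‖fhat ζ‖ ≤ ‖c‖ * C * min 1 (t⁻¹ ^ m) := fun ζ hζ t ht htζ => by
    rw [mul_assoc]
    exact (norm_mul_le _ _).trans (mul_le_mul_of_nonneg_left (hC ζ hζ t ht htζ) (norm_nonneg c))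
  exact ⟨fun z hz => integrableOn_stripIntegrand hm hGm hG2 hfhat_decay
      hfhat_diff.continuous hz.1 hz.2,
    continuousOn_integral_stripIntegrand hm hGm hG2 hfhat_decay hfhat_diff.continuous,
    differentiableOn_integral_stripIntegrand hm hGm hG2 hfhat_decay hfhat_diff⟩
end

section
/- Fix an integer m ≥ 1. Let f, g : ℝ → ℂ be smooth functions with f(x + 2π) = (-1)^m f(x) and g(x + 2π) = (-1)^m g(x) for all x ∈ ℝ, and for k ∈ ℕ set f̂_{-k} := (2π)^{-1} ∫_{-π}^{π} f(x) e^{i(k + m/2)x} dx, similarly ĝ_{-k}. Then the series Σ_{k=0}^{∞} C(m+k-1, k) · conj(f̂_{-k}) · ĝ_{-k} converges absolutely and lim_{ε → 0⁺} (2π)^{-2} ∫_{-π}^{π} ∫_{-π}^{π} e^{i m (x-y)/2} · (e^{i(x-y)} - (1-ε))^{-m} · g(y) · conj(f(x)) dy dx = Σ_{k=0}^{∞} C(m+k-1, k) · conj(f̂_{-k}) · ĝ_{-k}, the limit being taken over ε ∈ (0, 1) and C(·,·) denoting the binomial coefficient. -/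
open MeasureTheory Real

/-!
Write `ξₙ = n + m/2`. For `‖r‖ < 1` the binomial series
`e^{imθ/2} (e^{iθ} - r)^{-m} = ∑ₙ C(m+n-1, n) rⁿ e^{-iξₙθ}` converges uniformly in `θ`, so
integrating it term by term against `g y * conj (f x)` with `θ = x - y` turns the regularized
double integral into the power series `∑ₙ C(m+n-1, n) conj (f̂ₙ) ĝₙ rⁿ` at `r = 1 - ε`.
The twist `f (x + 2π) = (-1)^m f x` is matched by `e^{2πiξₙ} = (-1)^m`, so the boundary terms
vanish when integrating by parts and smoothness gives `f̂ₙ, ĝₙ = O(ξₙ^{-(m+1)})`. Against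
`C(m+n-1, n) = O(ξₙ^m)` the series converges absolutely at `r = 1`, and Abel's theorem gives
the limit `ε → 0⁺`.
-/

open Filter Topology
open scoped ComplexConjugate

lemma hasSum_intervalIntegral_of_norm_le_mul {E : Type*} [NormedAddCommGroup E] [NormedSpace ℝ E]
    {F : ℕ → ℝ → E} {G : ℝ → E} {c : ℕ → ℝ} {h : ℝ → ℝ} {a b : ℝ}
    (hF : ∀ n, Continuous (F n)) (hh : Continuous h) (hc : Summable c)
    (hbound : ∀ n t, ‖F n t‖ ≤ c n * h t) (hsum : ∀ t, HasSum (fun n => F n t) (G t)) :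
    HasSum (fun n => ∫ t in a..b, F n t) (∫ t in a..b, G t) := by
  refine intervalIntegral.hasSum_integral_of_dominated_convergence (fun n t => c n * h t)
    (fun n => (hF n).aestronglyMeasurable) (fun n => .of_forall fun t _ => hbound n t)
    (.of_forall fun t _ => hc.mul_right (h t)) ?_ (.of_forall fun t _ => hsum t)
  simp_rw [tsum_mul_right]
  exact (continuous_const.mul hh).intervalIntegrable _ _

lemma tendsto_tsum_mul_one_sub_pow {b : ℕ → ℂ} {s : ℂ} (hb : HasSum b s) :
    Tendsto (fun ε : ℝ => ∑' k, b k * (1 - (ε : ℂ)) ^ k) (𝓝[Set.Ioo 0 1] 0) (𝓝 s) := by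
  have hlim : Tendsto (fun ε : ℝ => 1 - ε) (𝓝[Set.Ioo 0 1] 0) (𝓝[<] 1) := by
    refine tendsto_nhdsWithin_of_tendsto_nhds_of_eventually_within _ ?_ ?_
    · exact ((continuous_const.sub continuous_id).tendsto' 0 1 (by simp)).mono_left
        nhdsWithin_le_nhds
    · filter_upwards [self_mem_nhdsWithin] with ε hε
      simp [hε.1]
  have := (Complex.tendsto_tsum_powerSeries_nhdsWithin_lt hb.tendsto_sum_nat).comp
    (tendsto_map.comp hlim)
  simpa [Function.comp_def] using this

lemma deriv_add_const_eq_mul {f : ℝ → ℂ} {c : ℂ} {T : ℝ} (hper : ∀ x, f (x + T) = c * f x)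
    (x : ℝ) : deriv f (x + T) = c * deriv f x := by
  rw [← deriv_comp_add_const, funext hper]
  exact deriv_const_mul_field _

lemma choose_add_sub_one_le_pow (m k : ℕ) (hm : 1 ≤ m) :
    (m + k - 1).choose k ≤ (2 * k + m) ^ m :=
  calc (m + k - 1).choose k = (m + k - 1).choose (m - 1) := Nat.choose_symm_of_eq_add (by omega)
    _ ≤ (m + k - 1) ^ (m - 1) := Nat.choose_le_pow _ _
    _ ≤ (2 * k + m) ^ m :=
      (Nat.pow_le_pow_left (by omega) _).trans (Nat.pow_le_pow_right (by omega) (by omega))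

lemma summable_norm_choose_mul_pow {m : ℕ} (hm : 1 ≤ m) {r : ℂ} (hr : ‖r‖ < 1) :
    Summable fun n : ℕ => ‖((m + n - 1).choose n : ℂ) * r ^ n‖ := by
  have hs := summable_choose_mul_geometric_of_norm_lt_one (m - 1) (r := ‖r‖) (by simpa using hr)
  refine hs.congr fun n => ?_
  rw [norm_mul, norm_pow, Complex.norm_natCast,
    Nat.choose_symm_of_eq_add (by omega : m + n - 1 = n + (m - 1)),
    show m + n - 1 = n + (m - 1) by omega]

-- `expCoeff f (k + m / 2)` is `2π f̂₋ₖ`.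
noncomputable def expCoeff (f : ℝ → ℂ) (ξ : ℝ) : ℂ :=
  ∫ x in (-π)..π, f x * Complex.exp (Complex.I * ξ * x)

lemma norm_exp_I_mul_mul (ξ x : ℝ) : ‖Complex.exp (Complex.I * ξ * x)‖ = 1 := by
  rw [show Complex.I * ξ * x = ((ξ * x : ℝ) : ℂ) * Complex.I by push_cast; ring]
  exact Complex.norm_exp_ofReal_mul_I _

lemma conj_exp_I_mul_mul (ξ x : ℝ) :
    conj (Complex.exp (Complex.I * ξ * x)) = Complex.exp (-(Complex.I * ξ * x)) := by
  rw [← Complex.exp_conj]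
  simp

lemma norm_expCoeff_le (f : ℝ → ℂ) (ξ : ℝ) : ‖expCoeff f ξ‖ ≤ ∫ x in (-π)..π, ‖f x‖ := by
  refine (intervalIntegral.norm_integral_le_integral_norm (by linarith [pi_pos])).trans_eq ?_
  simp only [norm_mul, norm_exp_I_mul_mul, mul_one]

lemma expCoeff_deriv {f : ℝ → ℂ} {c : ℂ} {ξ : ℝ} (hf : ContDiff ℝ 1 f)
    (hper : ∀ x, f (x + 2 * π) = c * f x) (hc : c * Complex.exp (2 * π * Complex.I * ξ) = 1) :
    expCoeff (deriv f) ξ = -(Complex.I * ξ) * expCoeff f ξ := by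
  set e : ℝ → ℂ := fun x => Complex.exp (Complex.I * ξ * x)
  obtain ⟨hdf, hcont⟩ := contDiff_one_iff_deriv.1 hf
  have he : Continuous e := by fun_prop
  have hde : ∀ x, HasDerivAt e (e x * (Complex.I * ξ)) x := fun x => by
    simpa using ((Complex.ofRealCLM.hasDerivAt (x := x)).const_mul (Complex.I * ξ)).cexp
  have hboundary : f π * e π = f (-π) * e (-π) := by
    have hf : f π = c * f (-π) := by simpa [show -π + 2 * π = π by ring] using hper (-π)
    have he : e π = Complex.exp (2 * π * Complex.I * ξ) * e (-π) := by
      simp only [e, ← Complex.exp_add]; push_cast; ring_nf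
    rw [hf, he]; linear_combination (f (-π) * e (-π)) * hc
  have hibp := intervalIntegral.integral_deriv_mul_eq_sub (a := -π) (b := π)
    (fun x _ => (hdf x).hasDerivAt) (fun x _ => hde x)
    (hcont.intervalIntegrable _ _) ((he.mul continuous_const).intervalIntegrable _ _)
  rw [hboundary, sub_self, intervalIntegral.integral_add (f := fun x => deriv f x * e x)
    (g := fun x => f x * (e x * (Complex.I * ξ))) ((hcont.mul he).intervalIntegrable _ _)
    ((hdf.continuous.mul (he.mul continuous_const)).intervalIntegrable _ _)] at hibp
  simp only [← mul_assoc, intervalIntegral.integral_mul_const] at hibp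
  simp only [expCoeff]
  linear_combination hibp

lemma expCoeff_iteratedDeriv {f : ℝ → ℂ} {c : ℂ} {ξ : ℝ} {n : ℕ} (hf : ContDiff ℝ n f)
    (hper : ∀ x, f (x + 2 * π) = c * f x) (hc : c * Complex.exp (2 * π * Complex.I * ξ) = 1) :
    expCoeff (iteratedDeriv n f) ξ = (-(Complex.I * ξ)) ^ n * expCoeff f ξ := by
  induction n generalizing f with
  | zero => simp
  | succ n ih =>
    have hderiv : ContDiff ℝ n (deriv f) :=
      (contDiff_succ_iff_deriv.1 (by exact_mod_cast hf)).2.2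
    rw [iteratedDeriv_succ', ih hderiv (deriv_add_const_eq_mul hper),
      expCoeff_deriv (hf.of_le (by exact_mod_cast Nat.le_add_left 1 n)) hper hc, pow_succ,
      mul_assoc]

lemma abs_pow_mul_norm_expCoeff_le {f : ℝ → ℂ} {c : ℂ} {ξ : ℝ} {n : ℕ} (hf : ContDiff ℝ n f)
    (hper : ∀ x, f (x + 2 * π) = c * f x) (hc : c * Complex.exp (2 * π * Complex.I * ξ) = 1) :
    |ξ| ^ n * ‖expCoeff f ξ‖ ≤ ∫ x in (-π)..π, ‖iteratedDeriv n f x‖ := by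
  have h := norm_expCoeff_le (iteratedDeriv n f) ξ
  rwa [expCoeff_iteratedDeriv hf hper hc, norm_mul, norm_pow, norm_neg, norm_mul, Complex.norm_I,
    one_mul, Complex.norm_real, Real.norm_eq_abs] at h

lemma neg_one_pow_mul_exp_two_pi_I_mul (m k : ℕ) :
    (-1 : ℂ) ^ m * Complex.exp (2 * π * Complex.I * ((k + m / 2 : ℝ) : ℂ)) = 1 := by
  have h : 2 * π * Complex.I * ((k + m / 2 : ℝ) : ℂ)
      = (k : ℤ) * (2 * π * Complex.I) + m * (π * Complex.I) := by push_cast; ring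
  rw [h, Complex.exp_add, Complex.exp_int_mul_two_pi_mul_I, Complex.exp_nat_mul,
    Complex.exp_pi_mul_I, one_mul, ← mul_pow]
  norm_num

lemma summable_norm_choose_mul_expCoeff {m : ℕ} (hm : 1 ≤ m) {f g : ℝ → ℂ}
    (hf : ContDiff ℝ (m + 1 : ℕ) f) (hg : ContDiff ℝ (m + 1 : ℕ) g)
    (hfper : ∀ x, f (x + 2 * π) = (-1) ^ m * f x)
    (hgper : ∀ x, g (x + 2 * π) = (-1) ^ m * g x) :
    Summable fun k : ℕ =>
      ‖((m + k - 1).choose k : ℂ) * conj (expCoeff f (k + m / 2)) * expCoeff g (k + m / 2)‖ := by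
  set A := ∫ x in (-π)..π, ‖iteratedDeriv (m + 1) f x‖
  set B := ∫ x in (-π)..π, ‖iteratedDeriv (m + 1) g x‖
  have hmajorant :
      Summable fun k : ℕ => 2 ^ m * A * B * (1 / |(k : ℝ) + m / 2| ^ ((m + 2 : ℕ) : ℝ)) :=
    ((Real.summable_one_div_nat_add_rpow _ _).2
      (by exact_mod_cast (by omega : 1 < m + 2))).mul_left _
  refine hmajorant.of_nonneg_of_le (fun _ => norm_nonneg _) fun k => ?_
  set ξ : ℝ := k + m / 2
  have hξ : 0 < ξ := by positivity
  have hdecay {h : ℝ → ℂ} (hh : ContDiff ℝ (m + 1 : ℕ) h)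
      (hper : ∀ x, h (x + 2 * π) = (-1) ^ m * h x) :
      ‖expCoeff h ξ‖ ≤ (∫ x in (-π)..π, ‖iteratedDeriv (m + 1) h x‖) / ξ ^ (m + 1) := by
    have h := abs_pow_mul_norm_expCoeff_le hh hper (neg_one_pow_mul_exp_two_pi_I_mul m k)
    rwa [abs_of_pos hξ, ← le_div_iff₀' (by positivity)] at h
  have hchoose : ((m + k - 1).choose k : ℝ) ≤ 2 ^ m * ξ ^ m := by
    calc ((m + k - 1).choose k : ℝ) ≤ ((2 * k + m) ^ m : ℕ) := by
          exact_mod_cast choose_add_sub_one_le_pow m k hm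
      _ = 2 ^ m * ξ ^ m := by rw [← mul_pow]; push_cast; ring
  rw [norm_mul, norm_mul, Complex.norm_natCast, RCLike.norm_conj, abs_of_pos hξ,
    Real.rpow_natCast]
  calc ((m + k - 1).choose k : ℝ) * ‖expCoeff f ξ‖ * ‖expCoeff g ξ‖
      ≤ 2 ^ m * ξ ^ m * (A / ξ ^ (m + 1)) * (B / ξ ^ (m + 1)) := by
        have hfξ := hdecay hf hfper
        have hgξ := hdecay hg hgper
        have hA : 0 ≤ A / ξ ^ (m + 1) := (norm_nonneg _).trans hfξ
        gcongr
    _ = 2 ^ m * A * B * (1 / ξ ^ (m + 2)) := by field_simp; ring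

-- The integrand of the theorem is `regKernel m (1 - ε) (x - y) * g y * conj (f x)`.
noncomputable def regKernel (m : ℕ) (r θ : ℂ) : ℂ :=
  Complex.exp (Complex.I * m * θ / 2) * ((Complex.exp (Complex.I * θ) - r) ^ m)⁻¹

lemma hasSum_regKernel {m : ℕ} (hm : 1 ≤ m) {r : ℂ} (hr : ‖r‖ < 1) (θ : ℝ) :
    HasSum (fun n : ℕ => ((m + n - 1).choose n : ℂ) * r ^ n *
      Complex.exp (-(Complex.I * ((n + m / 2 : ℝ) : ℂ) * θ))) (regKernel m r θ) := by
  set z := r * Complex.exp (-(Complex.I * θ))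
  have hz : ‖z‖ < 1 := by simpa [z, Complex.norm_exp] using hr
  have hs := (hasSum_choose_mul_geometric_of_norm_lt_one (m - 1) hz).mul_left
    (Complex.exp (-(Complex.I * m * θ / 2)))
  rw [Nat.sub_add_cancel hm] at hs
  have hterm (n : ℕ) : ((m + n - 1).choose n : ℂ) * r ^ n *
      Complex.exp (-(Complex.I * ((n + m / 2 : ℝ) : ℂ) * θ))
      = Complex.exp (-(Complex.I * m * θ / 2)) * ((n + (m - 1)).choose (m - 1) * z ^ n) := by
    have hexp : Complex.exp (-(Complex.I * ((n + m / 2 : ℝ) : ℂ) * θ))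
        = Complex.exp (-(Complex.I * m * θ / 2)) * Complex.exp (-(Complex.I * θ)) ^ n := by
      rw [← Complex.exp_nat_mul, ← Complex.exp_add]; push_cast; ring_nf
    rw [Nat.choose_symm_of_eq_add (by omega : m + n - 1 = n + (m - 1)),
      show m + n - 1 = n + (m - 1) by omega, hexp, mul_pow]
    ring
  have hfactor : Complex.exp (Complex.I * θ) - r = Complex.exp (Complex.I * θ) * (1 - z) := by
    simp only [z, mul_sub, mul_one, ← mul_assoc, mul_comm _ r, mul_assoc r,
      ← Complex.exp_add, add_neg_cancel, Complex.exp_zero, mul_one]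
  have hvalue : regKernel m r θ = Complex.exp (-(Complex.I * m * θ / 2)) * (1 / (1 - z) ^ m) := by
    simp only [regKernel]
    rw [hfactor, mul_pow, ← Complex.exp_nat_mul, mul_inv, one_div, ← mul_assoc,
      ← Complex.exp_neg, ← Complex.exp_add]
    congr 2
    ring
  rw [funext hterm, hvalue]
  exact hs

lemma hasSum_regKernel_sub_mul {m : ℕ} (hm : 1 ≤ m) {r : ℂ} (hr : ‖r‖ < 1) (u v : ℂ) (x y : ℝ) :
    HasSum (fun n : ℕ => ((m + n - 1).choose n : ℂ) * r ^ n *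
        conj (u * Complex.exp (Complex.I * ((n + m / 2 : ℝ) : ℂ) * x)) *
        (v * Complex.exp (Complex.I * ((n + m / 2 : ℝ) : ℂ) * y)))
      (regKernel m r (x - y) * v * conj u) := by
  rw [mul_assoc, ← Complex.ofReal_sub]
  refine ((hasSum_regKernel hm hr (x - y)).mul_right _).congr_fun fun n => ?_
  have hsplit : Complex.exp (-(Complex.I * ((n + m / 2 : ℝ) : ℂ) * ((x - y : ℝ) : ℂ)))
      = Complex.exp (-(Complex.I * ((n + m / 2 : ℝ) : ℂ) * x)) *
        Complex.exp (Complex.I * ((n + m / 2 : ℝ) : ℂ) * y) := by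
    rw [← Complex.exp_add]; push_cast; ring_nf
  simp only [map_mul, conj_exp_I_mul_mul, hsplit]
  ring

lemma hasSum_integral_integral_regKernel {m : ℕ} (hm : 1 ≤ m) {f g : ℝ → ℂ}
    (hf : Continuous f) (hg : Continuous g) {r : ℂ} (hr : ‖r‖ < 1) :
    HasSum (fun n : ℕ => ((m + n - 1).choose n : ℂ) * conj (expCoeff f (n + m / 2)) *
        expCoeff g (n + m / 2) * r ^ n)
      (∫ x in (-π)..π, ∫ y in (-π)..π, regKernel m r (x - y) * g y * conj (f x)) := by
  set a : ℕ → ℂ := fun n => ((m + n - 1).choose n : ℂ) * r ^ n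
  set e : ℕ → ℝ → ℂ := fun n x => Complex.exp (Complex.I * ((n + m / 2 : ℝ) : ℂ) * x)
  have ha := summable_norm_choose_mul_pow hm hr
  have hinner (x : ℝ) : HasSum (fun n => a n * conj (f x * e n x) * expCoeff g (n + m / 2))
      (∫ y in (-π)..π, regKernel m r (x - y) * g y * conj (f x)) := by
    refine (hasSum_intervalIntegral_of_norm_le_mul (c := fun n => ‖a n‖ * ‖f x‖)
      (h := fun y => ‖g y‖) (fun n => by fun_prop) (by fun_prop) (ha.mul_right _)
      (fun n y => le_of_eq ?_) fun y => hasSum_regKernel_sub_mul hm hr (f x) (g y) x y).congr_fun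
      fun n => ?_
    · simp only [a, norm_mul, RCLike.norm_conj, norm_exp_I_mul_mul]
      ring
    · rw [intervalIntegral.integral_const_mul]
      rfl
  refine (hasSum_intervalIntegral_of_norm_le_mul
    (c := fun n => ‖a n‖ * ∫ y in (-π)..π, ‖g y‖) (h := fun x => ‖f x‖) (fun n => by fun_prop)
    (by fun_prop) (ha.mul_right _) (fun n x => ?_) hinner).congr_fun fun n => ?_
  · simp only [norm_mul, RCLike.norm_conj, e, norm_exp_I_mul_mul, mul_one]
    have hg_le := norm_expCoeff_le g (n + m / 2)
    calc ‖a n‖ * ‖f x‖ * ‖expCoeff g (n + m / 2)‖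
        ≤ ‖a n‖ * ‖f x‖ * ∫ y in (-π)..π, ‖g y‖ := by gcongr
      _ = _ := by ring
  · rw [intervalIntegral.integral_mul_const, intervalIntegral.integral_const_mul,
      intervalIntegral.intervalIntegral_conj]
    simp only [a, expCoeff, e]
    ring

theorem stmt3 (m : ℕ) (hm : 1 ≤ m) (f g : ℝ → ℂ)
    (hf : ContDiff ℝ (⊤ : ℕ∞) f) (hg : ContDiff ℝ (⊤ : ℕ∞) g)
    (hfper : ∀ x : ℝ, f (x + 2 * π) = (-1 : ℂ) ^ m * f x)
    (hgper : ∀ x : ℝ, g (x + 2 * π) = (-1 : ℂ) ^ m * g x) :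
    let fhat : ℕ → ℂ := fun k =>
      (2 * (π : ℂ))⁻¹ * ∫ x in (-π)..π, f x * Complex.exp (Complex.I * ((k : ℂ) + (m : ℂ) / 2) * x)
    let ghat : ℕ → ℂ := fun k =>
      (2 * (π : ℂ))⁻¹ * ∫ x in (-π)..π, g x * Complex.exp (Complex.I * ((k : ℂ) + (m : ℂ) / 2) * x)
    Summable (fun k : ℕ => ‖((m + k - 1).choose k : ℂ) * (starRingEnd ℂ) (fhat k) * ghat k‖) ∧
    Filter.Tendsto (fun ε : ℝ =>
        ((2 * (π : ℂ)) ^ 2)⁻¹ * ∫ x in (-π)..π, ∫ y in (-π)..π,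
          Complex.exp (Complex.I * m * ((x : ℂ) - (y : ℂ)) / 2) *
            ((Complex.exp (Complex.I * ((x : ℂ) - (y : ℂ))) - (1 - (ε : ℂ))) ^ m)⁻¹ *
              g y * (starRingEnd ℂ) (f x))
      (nhdsWithin 0 (Set.Ioo 0 1))
      (nhds (∑' k : ℕ, ((m + k - 1).choose k : ℂ) * (starRingEnd ℂ) (fhat k) * ghat k)) := by
  intro fhat ghat
  set b : ℕ → ℂ := fun k =>
    ((m + k - 1).choose k : ℂ) * conj (expCoeff f (k + m / 2)) * expCoeff g (k + m / 2)
  have hterm (k : ℕ) : ((m + k - 1).choose k : ℂ) * conj (fhat k) * ghat k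
      = ((2 * (π : ℂ)) ^ 2)⁻¹ * b k := by
    simp only [fhat, ghat, b, expCoeff, map_mul, map_inv₀, map_ofNat, Complex.conj_ofReal]
    push_cast
    ring
  have hsmooth : ((m + 1 : ℕ) : WithTop ℕ∞) ≤ (⊤ : ℕ∞) := by exact_mod_cast le_top
  have hb :=
    summable_norm_choose_mul_expCoeff hm (hf.of_le hsmooth) (hg.of_le hsmooth) hfper hgper
  simp only [hterm, norm_mul, tsum_mul_left]
  refine ⟨hb.mul_left _,
    ((tendsto_tsum_mul_one_sub_pow hb.of_norm.hasSum).const_mul _).congr' ?_⟩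
  filter_upwards [self_mem_nhdsWithin] with ε hε
  have hr : ‖1 - (ε : ℂ)‖ < 1 := by
    rw [← Complex.ofReal_one, ← Complex.ofReal_sub, Complex.norm_real, Real.norm_eq_abs,
      abs_lt]
    constructor <;> linarith [hε.1, hε.2]
  exact congrArg _ (hasSum_integral_integral_regKernel hm hf.continuous hg.continuous hr).tsum_eq
end

section
/- Let f : ℝ → ℂ be smooth and compactly supported with supp f ⊆ (-∞, 0]. Define f̂(ζ) := (2π)^{-1/2} ∫_ℝ f(x) e^{-iζx} dx for ζ ∈ ℂ. Then f̂ is entire (holomorphic on all of ℂ), and for all k, m ∈ ℕ and every ζ ∈ ℂ with Im ζ ≥ 0, |ζ^{k} · f̂^{(m)}(ζ)| ≤ (2π)^{-1/2} ∫_ℝ |(d/dx)^{k} (x^{m} f(x))| dx, where f̂^{(m)} denotes the m-th complex derivative of f̂. -/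
/-!
For `Im ζ ≥ 0` the kernel `e^{-iζx}` has modulus `e^{x Im ζ} ≤ 1` on `(-∞, 0]`, so the transform of
any integrable function supported there is bounded by its `L¹` norm. Differentiating under the
integral sign shows that the transform is entire, with `m`-th derivative the transform of
`(-ix)^m f`, and `k` integrations by parts turn `ζ^k` times the transform of `g` into `(-i)^k` times
the transform of `g^{(k)}`; applied to `g = x^m f` these give the bound.
-/

open MeasureTheory Real Complex Set Function

lemma tsupport_iteratedDeriv_subset {𝕜 F : Type*} [NontriviallyNormedField 𝕜]
    [NormedAddCommGroup F] [NormedSpace 𝕜 F] (f : 𝕜 → F) (k : ℕ) :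
    tsupport (iteratedDeriv k f) ⊆ tsupport f := by
  induction k with
  | zero => simp
  | succ k ih => exact (iteratedDeriv_succ (f := f) ▸ tsupport_deriv_subset).trans ih

lemma HasCompactSupport.iteratedDeriv {𝕜 F : Type*} [NontriviallyNormedField 𝕜]
    [NormedAddCommGroup F] [NormedSpace 𝕜 F] {f : 𝕜 → F} (hf : HasCompactSupport f) (k : ℕ) :
    HasCompactSupport (iteratedDeriv k f) :=
  hf.mono' ((subset_tsupport _).trans (tsupport_iteratedDeriv_subset f k))

noncomputable def fourierLaplaceIntegral (h : ℝ → ℂ) (ζ : ℂ) : ℂ :=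
  ∫ x : ℝ, h x * cexp (-(I * ζ * x))

lemma fourierLaplaceIntegral_const_mul (c : ℂ) (h : ℝ → ℂ) (ζ : ℂ) :
    fourierLaplaceIntegral (fun x => c * h x) ζ = c * fourierLaplaceIntegral h ζ := by
  simp only [fourierLaplaceIntegral, mul_assoc, integral_const_mul]

lemma norm_cexp_neg_I_mul_mul_ofReal (ζ : ℂ) (x : ℝ) :
    ‖cexp (-(I * ζ * x))‖ = rexp (x * ζ.im) := by
  rw [Complex.norm_exp]
  simp [Complex.mul_re, Complex.mul_im, mul_comm]

lemma hasDerivAt_cexp_neg_I_mul_mul_ofReal (ζ : ℂ) (x : ℝ) :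
    HasDerivAt (fun y : ℝ => cexp (-(I * ζ * y))) (-(I * ζ) * cexp (-(I * ζ * x))) x := by
  have := ((Complex.ofRealCLM.hasDerivAt (x := x)).const_mul (-(I * ζ))).cexp
  simpa [mul_comm, mul_left_comm, mul_assoc] using this

lemma hasDerivAt_cexp_neg_I_mul_ofReal_mul (ζ : ℂ) (x : ℝ) :
    HasDerivAt (fun z : ℂ => cexp (-(I * z * x))) (-(I * x) * cexp (-(I * ζ * x))) ζ := by
  have := ((hasDerivAt_id ζ).const_mul (-(I * x))).cexp
  simpa [mul_comm, mul_left_comm, mul_assoc] using this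

lemma mul_im_le_of_mem_ball {ζ z : ℂ} (hz : z ∈ Metric.ball ζ 1) (x : ℝ) :
    x * z.im ≤ |x| * (‖ζ‖ + 1) := by
  have hz' : ‖z‖ ≤ ‖ζ‖ + 1 := by
    have := norm_le_norm_add_norm_sub' z ζ
    rw [mem_ball_iff_norm] at hz
    linarith
  calc x * z.im ≤ |x| * |z.im| := by rw [← abs_mul]; exact le_abs_self _
    _ ≤ |x| * (‖ζ‖ + 1) := by gcongr; exact (abs_im_le_norm z).trans hz'

theorem hasDerivAt_fourierLaplaceIntegral {h : ℝ → ℂ} (hc : Continuous h)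
    (hs : HasCompactSupport h) (ζ : ℂ) :
    HasDerivAt (fourierLaplaceIntegral h)
      (fourierLaplaceIntegral (fun x => -(I * x) * h x) ζ) ζ := by
  have hF : ∀ z : ℂ, Continuous fun x : ℝ => h x * cexp (-(I * z * x)) := fun z => by fun_prop
  have hF' : ∀ z : ℂ, Continuous fun x : ℝ => -(I * x) * h x * cexp (-(I * z * x)) :=
    fun z => by fun_prop
  have key := hasDerivAt_integral_of_dominated_loc_of_deriv_le (μ := volume)
    (F' := fun z x => -(I * x) * h x * cexp (-(I * z * x)))
    (bound := fun x => |x| * ‖h x‖ * rexp (|x| * (‖ζ‖ + 1)))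
    (Metric.ball_mem_nhds ζ one_pos)
    (.of_forall fun z => (hF z).aestronglyMeasurable)
    ((hF ζ).integrable_of_hasCompactSupport hs.mul_right)
    (hF' ζ).aestronglyMeasurable
    (.of_forall fun x z hz => ?_)
    ((by fun_prop : Continuous _).integrable_of_hasCompactSupport
      (hs.norm.mul_left.mul_right))
    (.of_forall fun x z _ =>
      ((hasDerivAt_cexp_neg_I_mul_ofReal_mul z x).const_mul (h x)).congr_deriv (by ring))
  · exact key.2
  · rw [norm_mul, norm_mul, norm_cexp_neg_I_mul_mul_ofReal]
    simp only [norm_neg, norm_mul, norm_I, one_mul, norm_real, Real.norm_eq_abs]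
    gcongr _ * rexp ?_
    exact mul_im_le_of_mem_ball hz x

theorem iteratedDeriv_fourierLaplaceIntegral (m : ℕ) {h : ℝ → ℂ} (hc : Continuous h)
    (hs : HasCompactSupport h) :
    iteratedDeriv m (fourierLaplaceIntegral h) =
      fourierLaplaceIntegral (fun x => (-(I * x)) ^ m * h x) := by
  induction m generalizing h with
  | zero => simp
  | succ m ih =>
    have hderiv : deriv (fourierLaplaceIntegral h) =
        fourierLaplaceIntegral (fun x => -(I * x) * h x) :=
      funext fun ζ => (hasDerivAt_fourierLaplaceIntegral hc hs ζ).deriv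
    rw [iteratedDeriv_succ', hderiv, ih (h := fun x => -(I * x) * h x) (by fun_prop) hs.mul_left]
    simp only [pow_succ, mul_assoc]

theorem fourierLaplaceIntegral_deriv {h : ℝ → ℂ} (hd : ContDiff ℝ 1 h)
    (hs : HasCompactSupport h) (ζ : ℂ) :
    fourierLaplaceIntegral (deriv h) ζ = I * ζ * fourierLaplaceIntegral h ζ := by
  have hh'_cont : Continuous (deriv h) := hd.continuous_deriv le_rfl
  have hparts := integral_mul_deriv_eq_deriv_mul_of_integrable
    (u := h) (u' := deriv h) (v := fun x : ℝ => cexp (-(I * ζ * x)))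
    (v' := fun x : ℝ => -(I * ζ) * cexp (-(I * ζ * x)))
    (fun x _ => (hd.differentiable one_ne_zero x).hasDerivAt)
    (fun x _ => hasDerivAt_cexp_neg_I_mul_mul_ofReal ζ x)
    ((by fun_prop : Continuous _).integrable_of_hasCompactSupport hs.mul_right)
    ((by fun_prop : Continuous _).integrable_of_hasCompactSupport hs.deriv.mul_right)
    ((by fun_prop : Continuous _).integrable_of_hasCompactSupport hs.mul_right)
  simp only [mul_left_comm (h _), integral_const_mul] at hparts
  unfold fourierLaplaceIntegral
  linear_combination hparts

theorem fourierLaplaceIntegral_iteratedDeriv {k : ℕ} {h : ℝ → ℂ} (hd : ContDiff ℝ k h)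
    (hs : HasCompactSupport h) (ζ : ℂ) :
    fourierLaplaceIntegral (iteratedDeriv k h) ζ = (I * ζ) ^ k * fourierLaplaceIntegral h ζ := by
  induction k with
  | zero => simp
  | succ k ih =>
    have hk : ContDiff ℝ 1 (iteratedDeriv k h) := by
      rw [iteratedDeriv_eq_iterate]
      exact ContDiff.iterate_deriv' 1 k (by rwa [add_comm])
    rw [iteratedDeriv_succ, fourierLaplaceIntegral_deriv hk (hs.iteratedDeriv k), ih
      (hd.of_le (by norm_cast; omega)), pow_succ]
    ring

theorem norm_fourierLaplaceIntegral_le {h : ℝ → ℂ} (hi : Integrable h)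
    (hsupp : support h ⊆ Iic 0) {ζ : ℂ} (hζ : 0 ≤ ζ.im) :
    ‖fourierLaplaceIntegral h ζ‖ ≤ ∫ x, ‖h x‖ := by
  refine norm_integral_le_of_norm_le hi.norm (.of_forall fun x => ?_)
  rw [norm_mul, norm_cexp_neg_I_mul_mul_ofReal]
  by_cases hx : h x = 0
  · simp [hx]
  · have hx0 : x ≤ 0 := hsupp hx
    exact mul_le_of_le_one_right (norm_nonneg _)
      (exp_le_one_iff.2 (mul_nonpos_of_nonpos_of_nonneg hx0 hζ))

theorem stmt6 (f : ℝ → ℂ) (hf : ContDiff ℝ (⊤ : ℕ∞) f) (hfc : HasCompactSupport f)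
    (hsupp : tsupport f ⊆ Set.Iic 0) :
    let fhat : ℂ → ℂ := fun ζ =>
      ((Real.sqrt (2 * π) : ℝ) : ℂ)⁻¹ * ∫ x : ℝ, f x * Complex.exp (-(Complex.I * ζ * x))
    Differentiable ℂ fhat ∧
    ∀ k m : ℕ, ∀ ζ : ℂ, 0 ≤ ζ.im →
      ‖ζ ^ k * iteratedDeriv m fhat ζ‖ ≤
        (Real.sqrt (2 * π))⁻¹ * ∫ x : ℝ, ‖iteratedDeriv k (fun y : ℝ => (y : ℂ) ^ m * f y) x‖ := by
  intro fhat
  set c : ℂ := ((Real.sqrt (2 * π) : ℝ) : ℂ)⁻¹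
  have hfhat : fhat = fun ζ => c * fourierLaplaceIntegral f ζ := rfl
  refine ⟨fun ζ => hfhat ▸
    (hasDerivAt_fourierLaplaceIntegral hf.continuous hfc ζ).differentiableAt.const_mul c,
    fun k m ζ hζ => ?_⟩
  set p : ℝ → ℂ := fun y => (y : ℂ) ^ m * f y
  have hp : ContDiff ℝ k p :=
    (ofRealCLM.contDiff.pow m).mul (hf.of_le (by exact_mod_cast le_top))
  have hps : HasCompactSupport p := hfc.mul_left
  have hdiff : iteratedDeriv m fhat ζ = c * ((-I) ^ m * fourierLaplaceIntegral p ζ) := by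
    rw [hfhat, iteratedDeriv_const_mul_field,
      iteratedDeriv_fourierLaplaceIntegral m hf.continuous hfc]
    simp only [p, neg_mul_eq_neg_mul, mul_pow, mul_assoc, fourierLaplaceIntegral_const_mul]
  have hint : Integrable (iteratedDeriv k p) :=
    (hp.continuous_iteratedDeriv k le_rfl).integrable_of_hasCompactSupport (hps.iteratedDeriv k)
  have hsupp_deriv : support (iteratedDeriv k p) ⊆ Iic 0 :=
    (subset_tsupport _).trans <| (tsupport_iteratedDeriv_subset p k).trans <|
      tsupport_mul_subset_right.trans hsupp
  calc ‖ζ ^ k * iteratedDeriv m fhat ζ‖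
      = ‖c‖ * ‖fourierLaplaceIntegral (iteratedDeriv k p) ζ‖ := by
        rw [hdiff, fourierLaplaceIntegral_iteratedDeriv hp hps]
        simp only [norm_mul, norm_pow, norm_neg, norm_I, one_pow, one_mul]
        ring
    _ ≤ ‖c‖ * ∫ x, ‖iteratedDeriv k p x‖ := by
        gcongr
        exact norm_fourierLaplaceIntegral_le hint hsupp_deriv hζ
    _ = _ := by simp [c, abs_of_nonneg (Real.sqrt_nonneg _)]
end

section
/- Let V be a complex inner product space (inner product linear in the second variable) and let L₋₁, L₀, L₁ : V → V be linear maps satisfying L₁∘L₋₁ - L₋₁∘L₁ = 2·L₀, L₀∘L₋₁ - L₋₁∘L₀ = L₋₁, and ⟨L₁ x, y⟩ = ⟨x, L₋₁ y⟩ for all x, y ∈ V. Let a ∈ V and d ∈ ℝ satisfy L₀ a = d·a and L₁ a = 0. Then for every n ∈ ℕ: ⟨L₋₁ⁿ a, L₋₁ⁿ a⟩ = n! · (∏_{j=0}^{n-1} (2d + j)) · ⟨a, a⟩. Equivalently, when 2d is a nonnegative integer, ‖(1/n!)·L₋₁ⁿ a‖² = C(2d + n - 1, n)·‖a‖² with the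 binomial coefficient C. -/
/-! Inductively, `L₋₁ⁿ a` is an `L₀`-eigenvector of weight `d + n`, and the commutation relations
give `L₁ L₋₁ⁿ⁺¹ a = (n + 1)(2d + n) L₋₁ⁿ a`. Moving one `L₋₁` across the inner product as `L₁`
then yields the recursion `‖L₋₁ⁿ⁺¹ a‖² = (n + 1)(2d + n) ‖L₋₁ⁿ a‖²`. When `2d = M` is a natural
number the product `∏ j < n, (M + j)` is the rising factorial `n! · C(M + n - 1, n)`. -/

open Nat

section Descendants

variable {R M : Type*} [CommRing R] [AddCommGroup M] [Module R M] (Lm1 L0 L1 : Module.End R M)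

theorem pow_succ_apply_eq_apply_pow_apply (n : ℕ) (x : M) :
    (Lm1 ^ (n + 1)) x = Lm1 ((Lm1 ^ n) x) := by
  rw [_root_.pow_succ', Module.End.mul_apply]

variable {Lm1 L0 L1}

theorem L0_pow_apply_of_eigen (hcomm2 : ∀ x, L0 (Lm1 x) - Lm1 (L0 x) = Lm1 x)
    {a : M} {c : R} (ha0 : L0 a = c • a) (n : ℕ) :
    L0 ((Lm1 ^ n) a) = (c + n) • (Lm1 ^ n) a := by
  induction n with
  | zero => simpa using ha0
  | succ k ih =>
    rw [pow_succ_apply_eq_apply_pow_apply, eq_add_of_sub_eq (hcomm2 _), ih, map_smul]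
    push_cast
    module

theorem L1_pow_succ_apply_of_quasiPrimary (hcomm1 : ∀ x, L1 (Lm1 x) - Lm1 (L1 x) = (2 : R) • L0 x)
    (hcomm2 : ∀ x, L0 (Lm1 x) - Lm1 (L0 x) = Lm1 x)
    {a : M} {c : R} (ha0 : L0 a = c • a) (ha1 : L1 a = 0) (n : ℕ) :
    L1 ((Lm1 ^ (n + 1)) a) = (((n : R) + 1) * (2 * c + n)) • (Lm1 ^ n) a := by
  induction n with
  | zero =>
    rw [pow_succ_apply_eq_apply_pow_apply, eq_add_of_sub_eq (hcomm1 _)]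
    simp only [pow_zero, Module.End.one_apply, ha1, ha0, map_zero, add_zero]
    push_cast
    module
  | succ k ih =>
    rw [pow_succ_apply_eq_apply_pow_apply, eq_add_of_sub_eq (hcomm1 _), ih, map_smul,
      L0_pow_apply_of_eigen hcomm2 ha0, ← pow_succ_apply_eq_apply_pow_apply]
    push_cast
    module

end Descendants

section Norms

variable {V : Type*} [NormedAddCommGroup V] [InnerProductSpace ℂ V] {Lm1 L0 L1 : Module.End ℂ V}

theorem inner_pow_self_of_quasiPrimary (hcomm1 : ∀ x, L1 (Lm1 x) - Lm1 (L1 x) = (2 : ℂ) • L0 x)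
    (hcomm2 : ∀ x, L0 (Lm1 x) - Lm1 (L0 x) = Lm1 x)
    (hadj : ∀ x y, inner ℂ (L1 x) y = inner ℂ x (Lm1 y))
    {a : V} {d : ℝ} (ha0 : L0 a = (d : ℂ) • a) (ha1 : L1 a = 0) (n : ℕ) :
    inner ℂ ((Lm1 ^ n) a) ((Lm1 ^ n) a) =
      (n ! : ℂ) * (∏ j ∈ Finset.range n, ((2 * d + j : ℝ) : ℂ)) * inner ℂ a a := by
  induction n with
  | zero => simp
  | succ k ih =>
    have step : inner ℂ ((Lm1 ^ (k + 1)) a) ((Lm1 ^ (k + 1)) a) =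
        ((k + 1) * (2 * d + k) : ℝ) * inner ℂ ((Lm1 ^ k) a) ((Lm1 ^ k) a) := by
      rw [pow_succ_apply_eq_apply_pow_apply Lm1 k, ← hadj, ← pow_succ_apply_eq_apply_pow_apply,
        L1_pow_succ_apply_of_quasiPrimary hcomm1 hcomm2 ha0 ha1, inner_smul_left]
      norm_cast
      rw [Complex.conj_ofReal]
    rw [step, ih, Nat.factorial_succ, Finset.prod_range_succ]
    push_cast
    ring

theorem norm_pow_sq_of_quasiPrimary (hcomm1 : ∀ x, L1 (Lm1 x) - Lm1 (L1 x) = (2 : ℂ) • L0 x)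
    (hcomm2 : ∀ x, L0 (Lm1 x) - Lm1 (L0 x) = Lm1 x)
    (hadj : ∀ x y, inner ℂ (L1 x) y = inner ℂ x (Lm1 y))
    {a : V} {d : ℝ} (ha0 : L0 a = (d : ℂ) • a) (ha1 : L1 a = 0) (n : ℕ) :
    ‖(Lm1 ^ n) a‖ ^ 2 = n ! * (∏ j ∈ Finset.range n, (2 * d + j)) * ‖a‖ ^ 2 := by
  have h := inner_pow_self_of_quasiPrimary hcomm1 hcomm2 hadj ha0 ha1 n
  rw [inner_self_eq_norm_sq_to_K, inner_self_eq_norm_sq_to_K] at h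
  apply Complex.ofReal_injective
  push_cast at h ⊢
  exact h

end Norms

theorem stmt10 {V : Type*} [NormedAddCommGroup V] [InnerProductSpace ℂ V]
    (Lm1 L0 L1 : Module.End ℂ V)
    (hcomm1 : ∀ x : V, L1 (Lm1 x) - Lm1 (L1 x) = (2 : ℂ) • L0 x)
    (hcomm2 : ∀ x : V, L0 (Lm1 x) - Lm1 (L0 x) = Lm1 x)
    (hadj : ∀ x y : V, (inner ℂ (L1 x) y : ℂ) = inner ℂ x (Lm1 y))
    (a : V) (d : ℝ) (ha0 : L0 a = (d : ℂ) • a) (ha1 : L1 a = 0) :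
    (∀ n : ℕ, (inner ℂ ((Lm1 ^ n) a) ((Lm1 ^ n) a) : ℂ) =
      (Nat.factorial n : ℂ) * (∏ j ∈ Finset.range n, ((2 * d + (j : ℝ) : ℝ) : ℂ)) *
        (inner ℂ a a : ℂ)) ∧
    (∀ M : ℕ, 2 * d = (M : ℝ) → ∀ n : ℕ,
      ‖((Nat.factorial n : ℂ))⁻¹ • (Lm1 ^ n) a‖ ^ 2 = ((M + n - 1).choose n : ℝ) * ‖a‖ ^ 2) := by
  refine ⟨inner_pow_self_of_quasiPrimary hcomm1 hcomm2 hadj ha0 ha1, fun M h2d n => ?_⟩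
  have hprod : ∏ j ∈ Finset.range n, (2 * d + j) = (n ! * (M + n - 1).choose n : ℕ) := by
    rw [← Nat.ascFactorial_eq_factorial_mul_choose', Nat.ascFactorial_eq_prod_range, h2d]
    push_cast
    rfl
  rw [norm_smul, mul_pow, norm_pow_sq_of_quasiPrimary hcomm1 hcomm2 hadj ha0 ha1, hprod,
    norm_inv, Complex.norm_natCast]
  push_cast
  field_simp
end

section
/- Let V be a complex inner product space (inner product linear in the second variable) and let L₋₁, L₀, L₁ : V → V be linear maps satisfying L₁∘L₋₁ - L₋₁∘L₁ = 2·L₀, L₀∘L₋₁ - L₋₁∘L₀ = L₋₁, and ⟨L₁ x, y⟩ = ⟨x, L₋₁ y⟩ for all x, y ∈ V. Let a ∈ V and d ∈ ℝ with d ≥ 0 satisfy L₀ a = d·a and L₁ a = 0. If c : ℕ → ℂ is rapidly decreasing, i.e. for every s ∈ ℕ the series Σ_{n=0}^{∞} (n+1)^{s} |c_n| converges, then Σ_{n=0}^{∞} (|c_n| / n!) · ‖L₋₁ⁿ a‖ < ∞; consequently the sequence of partial sums N ↦ Σ_{n<N} (c_n / n!) · L₋₁ⁿ a is a Cauchy sequence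 in V. -/
/-!
Along the lowering orbit `Lₙ := L₋₁ⁿ a` of a quasi-primary vector the commutation relations give
`L₀ Lₙ = (d + n) Lₙ` and `L₁ Lₙ₊₁ = (n + 1)(2d + n) Lₙ`, so by unitarity
`‖Lₙ₊₁‖² = (n + 1)(2d + n) ‖Lₙ‖²`. Hence `‖Lₙ‖ / n!` grows at most polynomially, and a rapidly
decreasing coefficient sequence makes the series absolutely convergent.
-/

open scoped Nat

theorem Nat.add_mul_succ_pow_le_succ_mul_pow (n k : ℕ) :
    (n + k) * (n + 1) ^ k ≤ (n + 1) * (n + 2) ^ k := by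
  induction k with
  | zero => simp
  | succ k ih =>
    have hpow : (n + 1) ^ k ≤ (n + 2) ^ k := Nat.pow_le_pow_left (by omega) k
    calc (n + (k + 1)) * (n + 1) ^ (k + 1)
        = (n + k) * (n + 1) ^ k * (n + 1) + (n + 1) * (n + 1) ^ k := by ring
      _ ≤ (n + 1) * (n + 2) ^ k * (n + 1) + (n + 1) * (n + 2) ^ k := by gcongr
      _ = (n + 1) * (n + 2) ^ (k + 1) := by ring

theorem le_sq_factorial_mul_pow_of_le_mul {u : ℕ → ℝ} (k : ℕ) (h0 : 0 ≤ u 0)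
    (hu : ∀ n : ℕ, u (n + 1) ≤ ((n : ℝ) + 1) * (n + k) * u n) (n : ℕ) :
    u n ≤ ((n ! : ℝ) * ((n : ℝ) + 1) ^ k) ^ 2 * u 0 := by
  induction n with
  | zero => simp
  | succ n ih =>
    have hstep :
        ((n : ℝ) + k) * ((n : ℝ) + 1) ^ (2 * k) ≤ ((n : ℝ) + 1) * ((n : ℝ) + 2) ^ (2 * k) :=
      calc ((n : ℝ) + k) * ((n : ℝ) + 1) ^ (2 * k)
          ≤ ((n : ℝ) + (2 * k : ℕ)) * ((n : ℝ) + 1) ^ (2 * k) := by gcongr; linarith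
        _ ≤ ((n : ℝ) + 1) * ((n : ℝ) + 2) ^ (2 * k) := by
          exact_mod_cast Nat.add_mul_succ_pow_le_succ_mul_pow n (2 * k)
    calc u (n + 1) ≤ ((n : ℝ) + 1) * (n + k) * u n := hu n
      _ ≤ ((n : ℝ) + 1) * (n + k) * (((n ! : ℝ) * ((n : ℝ) + 1) ^ k) ^ 2 * u 0) := by gcongr
      _ = ((n : ℝ) + 1) * (n ! : ℝ) ^ 2 * u 0 * (((n : ℝ) + k) * ((n : ℝ) + 1) ^ (2 * k)) := by
        ring
      _ ≤ ((n : ℝ) + 1) * (n ! : ℝ) ^ 2 * u 0 * (((n : ℝ) + 1) * ((n : ℝ) + 2) ^ (2 * k)) := by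
        gcongr
      _ = (((n + 1) ! : ℝ) * (((n + 1 : ℕ) : ℝ) + 1) ^ k) ^ 2 * u 0 := by
        rw [Nat.factorial_succ]; push_cast; ring

section Lowering

variable {R M : Type*} [CommRing R] [AddCommGroup M] [Module R M] {Lm1 L0 L1 : Module.End R M}
  {a : M} {d : R}

theorem L0_Lm1_pow_apply (hcomm2 : ∀ x : M, L0 (Lm1 x) - Lm1 (L0 x) = Lm1 x)
    (ha0 : L0 a = d • a) (n : ℕ) : L0 ((Lm1 ^ n) a) = (d + n) • (Lm1 ^ n) a := by
  induction n with
  | zero => simpa using ha0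
  | succ n ih =>
    rw [pow_succ', Module.End.mul_apply, ← sub_add_cancel (L0 _) (Lm1 (L0 _)), hcomm2, ih,
      map_smul]
    push_cast
    module

theorem L1_Lm1_pow_succ_apply (hcomm1 : ∀ x : M, L1 (Lm1 x) - Lm1 (L1 x) = (2 : R) • L0 x)
    (hcomm2 : ∀ x : M, L0 (Lm1 x) - Lm1 (L0 x) = Lm1 x) (ha0 : L0 a = d • a) (ha1 : L1 a = 0)
    (n : ℕ) : L1 ((Lm1 ^ (n + 1)) a) = (((n : R) + 1) * (2 * d + n)) • (Lm1 ^ n) a := by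
  induction n with
  | zero =>
    rw [zero_add, pow_one, ← sub_add_cancel (L1 _) (Lm1 (L1 a)), hcomm1, ha1, ha0, map_zero]
    simp only [pow_zero, Module.End.one_apply, Nat.cast_zero]
    module
  | succ n ih =>
    rw [pow_succ' _ (n + 1), Module.End.mul_apply, ← sub_add_cancel (L1 _) (Lm1 (L1 _)), hcomm1,
      ih, L0_Lm1_pow_apply hcomm2 ha0, map_smul, ← Module.End.mul_apply, ← pow_succ']
    push_cast
    module

end Lowering

section Unitary

variable {V : Type*} [NormedAddCommGroup V] [InnerProductSpace ℂ V] {Lm1 L0 L1 : Module.End ℂ V}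
  {a : V} {d : ℝ}

theorem norm_Lm1_pow_succ_sq (hcomm1 : ∀ x : V, L1 (Lm1 x) - Lm1 (L1 x) = (2 : ℂ) • L0 x)
    (hcomm2 : ∀ x : V, L0 (Lm1 x) - Lm1 (L0 x) = Lm1 x)
    (hadj : ∀ x y : V, (inner ℂ (L1 x) y : ℂ) = inner ℂ x (Lm1 y))
    (ha0 : L0 a = (d : ℂ) • a) (ha1 : L1 a = 0) (n : ℕ) :
    ‖(Lm1 ^ (n + 1)) a‖ ^ 2 = ((n : ℝ) + 1) * (2 * d + n) * ‖(Lm1 ^ n) a‖ ^ 2 := by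
  apply Complex.ofReal_injective
  have hinner := hadj ((Lm1 ^ (n + 1)) a) ((Lm1 ^ n) a)
  rw [L1_Lm1_pow_succ_apply hcomm1 hcomm2 ha0 ha1, inner_smul_left, ← Module.End.mul_apply,
    ← pow_succ', inner_self_eq_norm_sq_to_K, inner_self_eq_norm_sq_to_K] at hinner
  push_cast
  simpa [Complex.conj_ofReal, map_ofNat] using hinner.symm

theorem norm_Lm1_pow_le (hcomm1 : ∀ x : V, L1 (Lm1 x) - Lm1 (L1 x) = (2 : ℂ) • L0 x)
    (hcomm2 : ∀ x : V, L0 (Lm1 x) - Lm1 (L0 x) = Lm1 x)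
    (hadj : ∀ x y : V, (inner ℂ (L1 x) y : ℂ) = inner ℂ x (Lm1 y))
    (ha0 : L0 a = (d : ℂ) • a) (ha1 : L1 a = 0) {k : ℕ} (hk : 2 * d ≤ k) (n : ℕ) :
    ‖(Lm1 ^ n) a‖ ≤ n ! * ((n : ℝ) + 1) ^ k * ‖a‖ := by
  have hrec (m : ℕ) :
      ‖(Lm1 ^ (m + 1)) a‖ ^ 2 ≤ ((m : ℝ) + 1) * (m + k) * ‖(Lm1 ^ m) a‖ ^ 2 := by
    rw [norm_Lm1_pow_succ_sq hcomm1 hcomm2 hadj ha0 ha1, add_comm (m : ℝ) k]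
    gcongr
  have hsq := le_sq_factorial_mul_pow_of_le_mul (u := fun m => ‖(Lm1 ^ m) a‖ ^ 2) k
    (sq_nonneg _) hrec n
  rw [pow_zero, Module.End.one_apply, ← mul_pow] at hsq
  exact (pow_le_pow_iff_left₀ (norm_nonneg _) (by positivity) two_ne_zero).mp hsq

end Unitary

theorem stmt12_general {V : Type*} [NormedAddCommGroup V] [InnerProductSpace ℂ V]
    (Lm1 L0 L1 : Module.End ℂ V)
    (hcomm1 : ∀ x : V, L1 (Lm1 x) - Lm1 (L1 x) = (2 : ℂ) • L0 x)
    (hcomm2 : ∀ x : V, L0 (Lm1 x) - Lm1 (L0 x) = Lm1 x)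
    (hadj : ∀ x y : V, (inner ℂ (L1 x) y : ℂ) = inner ℂ x (Lm1 y))
    (a : V) (d : ℝ) (ha0 : L0 a = (d : ℂ) • a) (ha1 : L1 a = 0)
    (c : ℕ → ℂ) (hc : ∀ s : ℕ, Summable fun n : ℕ => ((n : ℝ) + 1) ^ s * ‖c n‖) :
    (Summable fun n : ℕ => ‖c n‖ / (Nat.factorial n : ℝ) * ‖(Lm1 ^ n) a‖) ∧
    CauchySeq (fun N : ℕ => ∑ n ∈ Finset.range N, (c n / (Nat.factorial n : ℂ)) • (Lm1 ^ n) a) := by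
  obtain ⟨k, hk⟩ := exists_nat_ge (2 * d)
  have hbound (n : ℕ) : ‖c n‖ / n ! * ‖(Lm1 ^ n) a‖ ≤ ‖a‖ * (((n : ℝ) + 1) ^ k * ‖c n‖) :=
    calc ‖c n‖ / n ! * ‖(Lm1 ^ n) a‖ ≤ ‖c n‖ / n ! * (n ! * ((n : ℝ) + 1) ^ k * ‖a‖) := by
          gcongr; exact norm_Lm1_pow_le hcomm1 hcomm2 hadj ha0 ha1 hk n
      _ = ‖a‖ * (((n : ℝ) + 1) ^ k * ‖c n‖) := by field_simp
  have hsum : Summable fun n : ℕ => ‖c n‖ / n ! * ‖(Lm1 ^ n) a‖ :=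
    .of_nonneg_of_le (fun n => by positivity) hbound ((hc k).mul_left _)
  refine ⟨hsum, cauchySeq_range_of_norm_bounded hsum.hasSum.tendsto_sum_nat.cauchySeq fun n => ?_⟩
  rw [norm_smul, norm_div, Complex.norm_natCast]

theorem stmt12 {V : Type*} [NormedAddCommGroup V] [InnerProductSpace ℂ V]
    (Lm1 L0 L1 : Module.End ℂ V)
    (hcomm1 : ∀ x : V, L1 (Lm1 x) - Lm1 (L1 x) = (2 : ℂ) • L0 x)
    (hcomm2 : ∀ x : V, L0 (Lm1 x) - Lm1 (L0 x) = Lm1 x)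
    (hadj : ∀ x y : V, (inner ℂ (L1 x) y : ℂ) = inner ℂ x (Lm1 y))
    (a : V) (d : ℝ) (hd : 0 ≤ d) (ha0 : L0 a = (d : ℂ) • a) (ha1 : L1 a = 0)
    (c : ℕ → ℂ) (hc : ∀ s : ℕ, Summable fun n : ℕ => ((n : ℝ) + 1) ^ s * ‖c n‖) :
    (Summable fun n : ℕ => ‖c n‖ / (Nat.factorial n : ℝ) * ‖(Lm1 ^ n) a‖) ∧
    CauchySeq (fun N : ℕ => ∑ n ∈ Finset.range N, (c n / (Nat.factorial n : ℂ)) • (Lm1 ^ n) a) :=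
  stmt12_general Lm1 L0 L1 hcomm1 hcomm2 hadj a d ha0 ha1 c hc
end
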